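/- arXiv:2002.11590 — 2 statements merged into one kernel-verified Lean document; each statement's English description precedes it below -/
import Mathlib

section
/- Let T be the substochastic transition matrix of a random walk on nodes {1,…,N-1} of graph G absorbed at node N, with (I-T) invertible, and θ_j = [(I-T)^{-1}]_{1j}/ρ_j where ρ_j is the degree of j. Then for 1 < j < N, Σ_{ℓ ∈ N_j} θ_j = Σ_{ℓ ∈ N_j} θ_ℓ (with θ_N := 0), i.e., the net flow into j equals the net flow out of j; and for j = 1 the net out-flow equals 1. -/
/-!
Write `B = (1 - T)⁻¹` and `v = B ⟨0, _⟩` for the row of expected visit counts from node `1`.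
Since `θ ℓ = v ℓ / ρ_ℓ` and `T ℓ j = 1 / ρ_ℓ` on edges, the in-flow `∑_{ℓ ∼ j} θ ℓ` at an
non-absorbing node `j` is `(v ᵥ* T) j`, while the out-flow `ρ_j θ_j` is `v j`. The identity
`B - 1 = B * T` says that these differ by `1` at the start node and agree everywhere else.
-/

namespace Matrix

variable {n R : Type*} [Fintype n] [DecidableEq n] [CommRing R]

theorem inv_one_sub_sub_one {T : Matrix n n R} (h : IsUnit (1 - T)) :
    (1 - T)⁻¹ - 1 = (1 - T)⁻¹ * T := by
  have hinv := nonsing_inv_mul (1 - T) ((isUnit_iff_isUnit_det _).mp h)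
  rw [mul_sub, mul_one, sub_eq_iff_eq_add'] at hinv
  rwa [sub_eq_iff_eq_add]

end Matrix

namespace SimpleGraph

open Matrix

variable {N : ℕ} (G : SimpleGraph (Fin (N + 1))) [DecidableRel G.Adj]

theorem sum_neighborFinset_eq_sum_castSucc {M : Type*} [AddCommMonoid M]
    (f : Fin (N + 1) → M) (hf : f (Fin.last N) = 0) (j : Fin (N + 1)) :
    ∑ ℓ ∈ G.neighborFinset j, f ℓ =
      ∑ m : Fin N, if G.Adj j m.castSucc then f m.castSucc else 0 := by
  rw [neighborFinset_eq_filter, Finset.sum_filter, Fin.sum_univ_castSucc, hf, ite_self,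
    add_zero]

theorem sum_neighborFinset_eq_vecMul (T : Matrix (Fin N) (Fin N) ℝ)
    (hT : ∀ j ℓ : Fin N, T j ℓ =
      if G.Adj j.castSucc ℓ.castSucc then 1 / (G.degree j.castSucc : ℝ) else 0)
    (v : Fin N → ℝ) (θ : Fin (N + 1) → ℝ) (hθlast : θ (Fin.last N) = 0)
    (hθ : ∀ m : Fin N, θ m.castSucc = v m / G.degree m.castSucc) (k : Fin N) :
    ∑ ℓ ∈ G.neighborFinset k.castSucc, θ ℓ = (v ᵥ* T) k := by
  rw [sum_neighborFinset_eq_sum_castSucc G θ hθlast, vecMul, dotProduct]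
  refine Finset.sum_congr rfl fun m _ => ?_
  by_cases hadj : G.Adj k.castSucc m.castSucc
  · rw [if_pos hadj, hT, if_pos hadj.symm, hθ, mul_one_div]
  · rw [if_neg hadj, hT, if_neg fun h => hadj h.symm, mul_zero]

end SimpleGraph

theorem theta_flow_conservation {N : ℕ} (hN : 0 < N)
    (G : SimpleGraph (Fin (N + 1))) [DecidableRel G.Adj] (hconn : G.Connected)
    (T : Matrix (Fin N) (Fin N) ℝ)
    (hT : ∀ j ℓ : Fin N, T j ℓ =
      if G.Adj j.castSucc ℓ.castSucc then 1 / (G.degree j.castSucc : ℝ) else 0)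
    (hinv : IsUnit (1 - T)) (θ : Fin (N + 1) → ℝ)
    (hθlast : θ (Fin.last N) = 0)
    (hθ : ∀ j (h : j ≠ Fin.last N),
      θ j = (1 - T)⁻¹ ⟨0, hN⟩ (j.castPred h) / (G.degree j : ℝ)) :
    (∀ j : Fin (N + 1), j ≠ 0 → j ≠ Fin.last N →
      ∑ _ℓ ∈ G.neighborFinset j, θ j = ∑ ℓ ∈ G.neighborFinset j, θ ℓ) ∧
    (∑ ℓ ∈ G.neighborFinset 0, (θ 0 - θ ℓ) = 1) := by
  set B := (1 - T)⁻¹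
  set start : Fin N := ⟨0, hN⟩
  have : Nontrivial (Fin (N + 1)) := Fin.nontrivial_iff_two_le.mpr (by omega)
  have hθ' (m : Fin N) : θ m.castSucc = B start m / G.degree m.castSucc := by
    simpa using hθ m.castSucc m.castSucc_ne_last
  have hout (m : Fin N) : ∑ _ℓ ∈ G.neighborFinset m.castSucc, θ m.castSucc = B start m := by
    have hdeg : (G.degree m.castSucc : ℝ) ≠ 0 :=
      Nat.cast_ne_zero.mpr (hconn.preconnected.degree_pos_of_nontrivial _).ne'
    rw [Finset.sum_const, G.card_neighborFinset_eq_degree, nsmul_eq_mul, hθ',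
      mul_div_cancel₀ _ hdeg]
  have hin (m : Fin N) :
      ∑ ℓ ∈ G.neighborFinset m.castSucc, θ ℓ = B start m - (1 : Matrix _ _ ℝ) start m := by
    rw [G.sum_neighborFinset_eq_vecMul T hT (B start) θ hθlast hθ', ← Matrix.sub_apply,
      Matrix.inv_one_sub_sub_one hinv]
    rfl
  refine ⟨fun j hj0 hjlast => ?_, ?_⟩
  · obtain ⟨m, rfl⟩ := Fin.exists_castSucc_eq.mpr hjlast
    have hm : start ≠ m := fun h => hj0 (h ▸ rfl)
    rw [hout, hin, Matrix.one_apply_ne hm, sub_zero]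
  · have h0 : (0 : Fin (N + 1)) = start.castSucc := rfl
    rw [Finset.sum_sub_distrib, h0, hout, hin, Matrix.one_apply_eq]
    ring
end

section
/- In the complete graph K_N with reference node N and start node 1, by symmetry the expected edge-traversal quantities θ_j (for j = 2,…,N-1) are all equal, and the quality estimate takes the closed form q̂_1 = (2/N) d̂_{1,N} + (1/N) Σ_{j=2}^{N-1} (d̂_{1,j} + d̂_{j,N}), where d̂ is an antisymmetric matrix of edge observations. -/
/-!
On `K_N` the normal equation at `i ≠ ref` reads `(N - 1) q_i = Σ_{j ≠ i} (q_j + d_ij)`, that is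
`N q_i = S + Σ_j d_ij` with `S = Σ_j q_j`. Summing over `i ≠ ref`, the observations between non-reference
nodes cancel by antisymmetry, which leaves `S = Σ_i d_{i,ref}`; hence `N q_v = Σ_j (d_vj + d_{j,ref})`,
the average of the direct observation and of all two-hop paths to the reference.

For `θ`, the matrix `1 - T` is invariant under every relabelling of the nodes, hence so is its inverse,
and a transposition fixing the start node swaps any two other entries of its row.
-/

open Finset

namespace Matrix

theorem submatrix_equiv_eq_self_of_apply_eq_ite {n R : Type*} [DecidableEq n] {A : Matrix n n R}
    {a b : R} (h : ∀ i j, A i j = if i ≠ j then a else b) (e : n ≃ n) : A.submatrix e e = A := by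
  ext i j
  simp [h, e.injective.eq_iff]

variable {n R : Type*} [Fintype n] [DecidableEq n] [CommRing R]

theorem inv_apply_equiv_of_submatrix_eq {A : Matrix n n R} {e : n ≃ n}
    (h : A.submatrix e e = A) (i j : n) : A⁻¹ (e i) (e j) = A⁻¹ i j := by
  conv_rhs => rw [← h, inv_submatrix_equiv]
  rfl

theorem inv_apply_eq_of_forall_submatrix_eq {A : Matrix n n R}
    (h : ∀ e : n ≃ n, A.submatrix e e = A) {i j k : n} (hj : j ≠ i) (hk : k ≠ i) :
    A⁻¹ i j = A⁻¹ i k := by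
  have hi : Equiv.swap j k i = i := Equiv.swap_apply_of_ne_of_ne hj.symm hk.symm
  rw [← inv_apply_equiv_of_submatrix_eq (h (Equiv.swap j k)) i j, hi, Equiv.swap_apply_left]

end Matrix

theorem Finset.sum_sum_eq_zero_of_antisymm {ι : Type*} {d : ι → ι → ℝ} (hd : ∀ i j, d i j = -d j i)
    (s : Finset ι) : ∑ i ∈ s, ∑ j ∈ s, d i j = 0 := by
  have h : ∑ i ∈ s, ∑ j ∈ s, d i j = -∑ i ∈ s, ∑ j ∈ s, d i j := by
    conv_lhs => rw [Finset.sum_comm]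
    simp only [← Finset.sum_neg_distrib]
    exact sum_congr rfl fun i _ => sum_congr rfl fun j _ => hd j i
  linarith

section LeastSquares

variable {ι : Type*} [Fintype ι] [DecidableEq ι] {d : ι → ι → ℝ}

theorem card_mul_eq_sum_add_sum_of_eq_average {q : ι → ℝ} {i : ι} (hdiag : d i i = 0)
    (hcard : 1 < Fintype.card ι)
    (hq : q i = (∑ j ∈ univ.erase i, (q j + d i j)) / ((Fintype.card ι : ℝ) - 1)) :
    (Fintype.card ι : ℝ) * q i = ∑ j, q j + ∑ j, d i j := by
  have hcard' : (Fintype.card ι : ℝ) - 1 ≠ 0 := by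
    have : (1 : ℝ) < Fintype.card ι := by exact_mod_cast hcard
    linarith
  rw [eq_div_iff hcard', sum_add_distrib] at hq
  rw [← add_sum_erase _ _ (mem_univ i), ← add_sum_erase univ (d i) (mem_univ i), hdiag]
  linarith

/-- The estimator equations on `K_N`, where every degree `ρ_i` is `card ι - 1`. -/
def IsCompleteGraphEstimate (d : ι → ι → ℝ) (ref : ι) (q : ι → ℝ) : Prop :=
  q ref = 0 ∧
    ∀ i, i ≠ ref → q i = (∑ j ∈ univ.erase i, (q j + d i j)) / ((Fintype.card ι : ℝ) - 1)

namespace IsCompleteGraphEstimate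

variable {ref : ι} {q : ι → ℝ}

theorem card_mul_apply_eq_sum_add_sum (hd : ∀ i j, d i j = -d j i)
    (hq : IsCompleteGraphEstimate d ref q) {i : ι} (hi : i ≠ ref) :
    (Fintype.card ι : ℝ) * q i = ∑ j, q j + ∑ j, d i j :=
  have : Nontrivial ι := nontrivial_of_ne i ref hi
  card_mul_eq_sum_add_sum_of_eq_average (by linarith [hd i i]) Fintype.one_lt_card (hq.2 i hi)

theorem sum_eq_sum_apply_ref (hd : ∀ i j, d i j = -d j i) (hq : IsCompleteGraphEstimate d ref q) :
    ∑ j, q j = ∑ i, d i ref := by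
  have hS : ∑ i ∈ univ.erase ref, q i = ∑ j, q j := by
    rw [← sum_erase_add _ _ (mem_univ ref), hq.1, add_zero]
  have hcard : ((univ.erase ref).card : ℝ) = Fintype.card ι - 1 := by
    rw [card_erase_of_mem (mem_univ ref), card_univ, Nat.cast_pred (Fintype.card_pos_iff.2 ⟨ref⟩)]
  have hrows : ∑ i ∈ univ.erase ref, ∑ j, d i j = ∑ i, d i ref := by
    have h := sum_erase_add univ (fun i => ∑ j, d i j) (mem_univ ref)
    rw [Finset.sum_sum_eq_zero_of_antisymm hd univ] at h
    rw [eq_neg_of_add_eq_zero_left h, ← sum_neg_distrib]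
    exact sum_congr rfl fun j _ => (hd j ref).symm
  have hsum : ∑ i ∈ univ.erase ref, (Fintype.card ι : ℝ) * q i =
      ∑ i ∈ univ.erase ref, (∑ j, q j + ∑ j, d i j) :=
    sum_congr rfl fun i hi => hq.card_mul_apply_eq_sum_add_sum hd (ne_of_mem_erase hi)
  rw [← mul_sum, hS, sum_add_distrib, sum_const, nsmul_eq_mul, hcard, hrows] at hsum
  linarith

theorem card_mul_apply_eq_sum (hd : ∀ i j, d i j = -d j i) (hq : IsCompleteGraphEstimate d ref q)
    (v : ι) : (Fintype.card ι : ℝ) * q v = ∑ j, (d v j + d j ref) := by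
  by_cases hv : v = ref
  · subst hv
    rw [hq.1, mul_zero]
    exact (sum_eq_zero fun j _ => by linarith [hd v j]).symm
  · rw [hq.card_mul_apply_eq_sum_add_sum hd hv, hq.sum_eq_sum_apply_ref hd, sum_add_distrib]
    ring

end IsCompleteGraphEstimate

theorem sum_add_eq_two_mul_add_sum_erase_erase (hd : ∀ i j, d i j = -d j i) (v r : ι) :
    ∑ j, (d v j + d j r) = 2 * d v r + ∑ j ∈ (univ.erase v).erase r, (d v j + d j r) := by
  by_cases hvr : v = r
  · subst hvr
    have h0 : ∀ j, d v j + d j v = 0 := fun j => by linarith [hd v j]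
    simp only [h0, sum_const_zero]
    linarith [hd v v]
  · rw [← sum_erase_add _ _ (mem_univ v),
      ← sum_erase_add _ _ (mem_erase.2 ⟨Ne.symm hvr, mem_univ r⟩)]
    linarith [hd v v, hd r r]

end LeastSquares

theorem complete_graph_closed_form_general (N : ℕ)
    (T : Matrix (Fin (N - 1)) (Fin (N - 1)) ℝ)
    (hT : ∀ j ℓ, T j ℓ = if j ≠ ℓ then 1 / ((N : ℝ) - 1) else 0)
    (st : Fin (N - 1))
    (θ : Fin (N - 1) → ℝ)
    (hθ : ∀ j, θ j = (1 - T)⁻¹ st j / ((N : ℝ) - 1))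
    (ref v1 : Fin N)
    (dhat : Matrix (Fin N) (Fin N) ℝ) (hanti : ∀ i j, dhat i j = - dhat j i)
    (qhat : Fin N → ℝ) (hqref : qhat ref = 0)
    (hq : ∀ i, i ≠ ref →
      qhat i = (∑ j ∈ Finset.univ.erase i, (qhat j + dhat i j)) / ((N : ℝ) - 1)) :
    (∀ j₁ j₂ : Fin (N - 1), j₁ ≠ st → j₂ ≠ st → θ j₁ = θ j₂) ∧
    qhat v1 = (2 / (N : ℝ)) * dhat v1 ref +
      (1 / (N : ℝ)) * ∑ j ∈ (Finset.univ.erase v1).erase ref, (dhat v1 j + dhat j ref) := by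
  refine ⟨fun j₁ j₂ h₁ h₂ => ?_, ?_⟩
  · have hinv (e : Fin (N - 1) ≃ Fin (N - 1)) : (1 - T).submatrix e e = 1 - T := by
      change (1 : Matrix _ _ ℝ).submatrix e e - T.submatrix e e = 1 - T
      rw [Matrix.submatrix_one_equiv, Matrix.submatrix_equiv_eq_self_of_apply_eq_ite hT]
    rw [hθ, hθ, Matrix.inv_apply_eq_of_forall_submatrix_eq hinv h₁ h₂]
  · have hN : (N : ℝ) ≠ 0 := Nat.cast_ne_zero.2 v1.pos.ne'
    have hest : IsCompleteGraphEstimate dhat ref qhat := ⟨hqref, by simpa only [Fintype.card_fin]⟩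
    have hclosed := hest.card_mul_apply_eq_sum hanti v1
    rw [Fintype.card_fin, sum_add_eq_two_mul_add_sum_erase_erase hanti] at hclosed
    field_simp
    linarith

theorem complete_graph_closed_form (N : ℕ) (hN : 3 ≤ N)
    (T : Matrix (Fin (N - 1)) (Fin (N - 1)) ℝ)
    (hT : ∀ j ℓ, T j ℓ = if j ≠ ℓ then 1 / ((N : ℝ) - 1) else 0)
    (st : Fin (N - 1)) (hst : (st : ℕ) = 0)
    (θ : Fin (N - 1) → ℝ)
    (hθ : ∀ j, θ j = (1 - T)⁻¹ st j / ((N : ℝ) - 1))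
    (ref v1 : Fin N) (href : (ref : ℕ) = N - 1) (hv1 : (v1 : ℕ) = 0)
    (dhat : Matrix (Fin N) (Fin N) ℝ) (hanti : ∀ i j, dhat i j = - dhat j i)
    (qhat : Fin N → ℝ) (hqref : qhat ref = 0)
    (hq : ∀ i, i ≠ ref →
      qhat i = (∑ j ∈ Finset.univ.erase i, (qhat j + dhat i j)) / ((N : ℝ) - 1)) :
    (∀ j₁ j₂ : Fin (N - 1), j₁ ≠ st → j₂ ≠ st → θ j₁ = θ j₂) ∧
    qhat v1 = (2 / (N : ℝ)) * dhat v1 ref +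
      (1 / (N : ℝ)) * ∑ j ∈ (Finset.univ.erase v1).erase ref, (dhat v1 j + dhat j ref) :=
  complete_graph_closed_form_general N T hT st θ hθ ref v1 dhat hanti qhat hqref hq
end
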